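/- arXiv:1710.08549 — 6 statements merged into one kernel-verified Lean document; each statement's English description precedes it below -/
import Mathlib

section
/- A pair of measurable mappings (y,z) : X → cl(Y) × cl(Z) is incentive compatible if and only if the function u(x) := G(x, y(x), z(x)) is G-convex and y(x) ∈ ∂ᴳu(x) for every x ∈ X. -/
def GConvexOn {E F : Type*} (X : Set E) (Ycl : Set F) (Zcl : Set ℝ)
    (G : E → F → ℝ → ℝ) (u : E → ℝ) : Prop :=
  ∀ x₀ ∈ X, ∃ y₀ ∈ Ycl, ∃ z₀ ∈ Zcl,
    u x₀ = G x₀ y₀ z₀ ∧ ∀ x ∈ X, G x y₀ z₀ ≤ u x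

def GSubdiff {E F : Type*} (X : Set E) (Ycl : Set F)
    (G : E → F → ℝ → ℝ) (H : E → F → ℝ → ℝ)
    (u : E → ℝ) (x : E) : Set F :=
  {y | y ∈ Ycl ∧ ∀ x' ∈ X, G x' y (H x y (u x)) ≤ u x'}

/-- The pair `(y,z)` is incentive compatible on `X`:
`G(x, y(x), z(x)) ≥ G(x, y(x'), z(x'))` for all `x, x' ∈ X`. -/
def IncentiveCompatible {E F : Type*} (X : Set E) (G : E → F → ℝ → ℝ)
    (y : E → F) (z : E → ℝ) : Prop :=
  ∀ x ∈ X, ∀ x' ∈ X, G x (y x') (z x') ≤ G x (y x) (z x)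

/-- A (product, price) pair `(y,z) : X → cl(Y) × cl(Z)` is incentive compatible iff
`u(x) := G(x, y(x), z(x))` is `G`-convex and `y(x) ∈ ∂ᴳu(x)` for every `x ∈ X`. -/
theorem incentiveCompatible_iff_gconvex
    {E F : Type*} (X : Set E) (Ycl : Set F) (Zcl : Set ℝ)
    (G H : E → F → ℝ → ℝ)
    (hGanti : ∀ x y, StrictAnti (G x y))
    (hHG : ∀ x y z, H x y (G x y z) = z)
    (hGH : ∀ x y u, G x y (H x y u) = u)
    (hHmem : ∀ x y u, H x y u ∈ Zcl)
    (y : E → F) (z : E → ℝ)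
    (hy : ∀ x ∈ X, y x ∈ Ycl) (hz : ∀ x ∈ X, z x ∈ Zcl) :
    IncentiveCompatible X G y z ↔
      (GConvexOn X Ycl Zcl G (fun x => G x (y x) (z x)) ∧
        ∀ x ∈ X, y x ∈ GSubdiff X Ycl G H (fun x' => G x' (y x') (z x')) x) := by
  constructor
  · intro hIC
    constructor
    · intro x₀ hx₀
      exact ⟨y x₀, hy x₀ hx₀, z x₀, hz x₀ hx₀, rfl, fun x hx => hIC x hx x₀ hx₀⟩
    · intro x hx
      refine ⟨hy x hx, fun x' hx' => ?_⟩
      simp only [hHG]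
      exact hIC x' hx' x hx
  · rintro ⟨-, hsub⟩ x hx x' hx'
    have h := (hsub x' hx').2 x hx
    simpa [hHG] using h
end

section
/- A function y : X → cl(Y) is implementable if and only if there exists a G-convex function u : X → ℝ such that y(x) ∈ ∂ᴳu(x) for every x ∈ X. -/
/-- `y` is implementable: there exists a price assignment `z : X → ℝ` making `(y,z)`
incentive compatible. -/
def Implementable {E F : Type*} (X : Set E) (G : E → F → ℝ → ℝ) (y : E → F) : Prop :=
  ∃ z : E → ℝ, IncentiveCompatible X G y z

/-- `y : X → cl(Y)` is implementable iff there exists a `G`-convex function `u` with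
`y(x) ∈ ∂ᴳu(x)` for every `x ∈ X`. -/
theorem implementable_iff_gsubdiff_of_gconvex
    {E F : Type*} (X : Set E) (Ycl : Set F) (Zcl : Set ℝ)
    (G H : E → F → ℝ → ℝ)
    (hGanti : ∀ x y, StrictAnti (G x y))
    (hHG : ∀ x y z, H x y (G x y z) = z)
    (hGH : ∀ x y u, G x y (H x y u) = u)
    (hHmem : ∀ x y u, H x y u ∈ Zcl)
    (y : E → F) (hy : ∀ x ∈ X, y x ∈ Ycl) :
    Implementable X G y ↔
      ∃ u : E → ℝ, GConvexOn X Ycl Zcl G u ∧ ∀ x ∈ X, y x ∈ GSubdiff X Ycl G H u x := by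
  constructor
  · rintro ⟨z, hz⟩
    refine ⟨fun x => G x (y x) (z x), ?_, ?_⟩
    · intro x₀ hx₀
      refine ⟨y x₀, hy x₀ hx₀, z x₀, ?_, rfl, fun x hx => hz x hx x₀ hx₀⟩
      have : z x₀ = H x₀ (y x₀) (G x₀ (y x₀) (z x₀)) := (hHG _ _ _).symm
      rw [this]; exact hHmem _ _ _
    · intro x hx
      refine ⟨hy x hx, fun x' hx' => ?_⟩
      rw [hHG]
      exact hz x' hx' x hx
  · rintro ⟨u, _, hsub⟩
    refine ⟨fun x => H x (y x) (u x), fun x hx x' hx' => ?_⟩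
    have h1 := (hsub x' hx').2 x hx
    have h2 : G x (y x) (H x (y x) (u x)) = u x := hGH _ _ _
    rw [h2]; exact h1
end

section
/- A function y : X → cl(Y) is implementable (via some z : X → ℝ) if and only if there exists a price menu p : cl(Y) → ℝ such that the pair (y, p ∘ y) is incentive compatible. -/
/-- `y : X → cl(Y)` is implementable (via some `z : X → ℝ`) iff there exists a price
menu `p : cl(Y) → ℝ` such that the pair `(y, p ∘ y)` is incentive compatible. -/
theorem implementable_iff_price_menu
    {E F : Type*} (X : Set E) (Ycl : Set F)
    (G : E → F → ℝ → ℝ)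
    (hGanti : ∀ x y, StrictAnti (G x y))
    (y : E → F) (hy : ∀ x ∈ X, y x ∈ Ycl) :
    Implementable X G y ↔
      ∃ p : F → ℝ, IncentiveCompatible X G y (fun x => p (y x)) := by
  constructor
  · rintro ⟨z, hz⟩
    -- z is constant on fibers of y over X
    have hconst : ∀ x ∈ X, ∀ x' ∈ X, y x = y x' → z x = z x' := by
      intro x hx x' hx' hyy
      by_contra hne
      rcases lt_or_gt_of_ne hne with h | h
      · have h1 := hz x' hx' x hx
        rw [← hyy] at h1
        exact absurd h1 (not_le.mpr (hGanti x' (y x) h))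
      · have h1 := hz x hx x' hx'
        rw [hyy] at h1
        exact absurd h1 (not_le.mpr (hGanti x (y x') h))
    classical
    refine ⟨fun b => if h : ∃ x ∈ X, y x = b then z h.choose else 0, ?_⟩
    have hp : ∀ x ∈ X, (if h : ∃ x' ∈ X, y x' = y x then z h.choose else 0) = z x := by
      intro x hx
      have hex : ∃ x' ∈ X, y x' = y x := ⟨x, hx, rfl⟩
      rw [dif_pos hex]
      exact hconst _ hex.choose_spec.1 x hx hex.choose_spec.2
    intro x hx x' hx'
    simp only [hp x hx, hp x' hx']
    exact hz x hx x' hx'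
  · rintro ⟨p, hp⟩
    exact ⟨fun x => p (y x), hp⟩
end

section
/- Let u be a G-convex function on X, ω a compact subset of X, and δ, R > 0 such that ω + δ·B̄(0,1) ⊆ X and |u(x)| ≤ R for all x ∈ ω + δ·B̄(0,1). Then there exists T = T(ω, δ, R) > 0, independent of u, such that ‖y‖ ≤ T for every x ∈ ω and every y ∈ ∂ᴳu(x). -/
/-!
Fix `x ∈ ω`, `y ∈ ∂ᴳu(x)` and `z = H(x, y, u(x))`, so that `G(·, y, z)` touches `u` from below
at `x`. Coordinatewise monotonicity makes every partial derivative of `G` in `x` nonnegative,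
so along the diagonal direction `w = c • (1, …, 1)` the derivative of `G(·, y, z)` is `c` times
the `ℓ¹`-norm of its gradient. If `‖y‖` were large, coercivity and the mean value theorem on the
segment `[x, x + w]` would make `G(·, y, z)` grow by more than `2R`, while `u` cannot oscillate by more than `2R` there.
-/

open scoped Pointwise

lemma HasFDerivAt.apply_single_nonneg_of_monotone {ι : Type*} [Fintype ι] [DecidableEq ι]
    {f : EuclideanSpace ℝ ι → ℝ} {f' : EuclideanSpace ℝ ι →L[ℝ] ℝ} {x : EuclideanSpace ℝ ι}
    (hf : HasFDerivAt f f' x) (hmono : ∀ α β : EuclideanSpace ℝ ι, (∀ i, β i ≤ α i) → f β ≤ f α)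
    (i : ι) : 0 ≤ f' (EuclideanSpace.single i 1) := by
  refine (hf.hasLineDerivAt _).nonneg_of_monotone fun s t hst => hmono _ _ fun j => ?_
  by_cases hij : j = i
  · subst hij
    simpa using hst
  · simp [hij]

lemma mul_le_sub_of_hasFDerivAt_segment {E ι : Type*} [NormedAddCommGroup E] [NormedSpace ℝ E]
    [Fintype ι] {f : E → ℝ} {f' : E → E →L[ℝ] ℝ} {v : ι → E} {x : E} {c s : ℝ} (hc : 0 ≤ c)
    (hf : ∀ ξ ∈ segment ℝ x (x + c • ∑ i, v i), HasFDerivAt f (f' ξ) ξ)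
    (hs : ∀ ξ ∈ segment ℝ x (x + c • ∑ i, v i), s ≤ ∑ i, f' ξ (v i)) :
    c * s ≤ f (x + c • ∑ i, v i) - f x := by
  obtain ⟨ξ, hξ, hmvt⟩ := domain_mvt (fun ξ hξ => (hf ξ hξ).hasFDerivWithinAt)
    (convex_segment _ _) (left_mem_segment ℝ _ _) (right_mem_segment ℝ _ _)
  rw [hmvt, add_sub_cancel_left, map_smul, map_sum, smul_eq_mul]
  exact mul_le_mul_of_nonneg_left (hs ξ hξ) hc

lemma norm_div_card_add_one_smul_sum_single_le {ι : Type*} [Fintype ι] [DecidableEq ι] {δ : ℝ}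
    (hδ : 0 ≤ δ) : ‖(δ / (Fintype.card ι + 1)) • ∑ i : ι, EuclideanSpace.single i (1 : ℝ)‖ ≤ δ := by
  have hsum : ‖∑ i : ι, EuclideanSpace.single i (1 : ℝ)‖ ≤ Fintype.card ι :=
    (norm_sum_le _ _).trans_eq (by simp)
  rw [norm_smul, Real.norm_of_nonneg (by positivity), div_mul_eq_mul_div,
    div_le_iff₀ (by positivity)]
  nlinarith

lemma segment_add_subset_add_closedBall {E : Type*} [SeminormedAddCommGroup E] [NormedSpace ℝ E]
    {ω : Set E} {x w : E} {δ : ℝ} (hx : x ∈ ω) (hw : ‖w‖ ≤ δ) :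
    segment ℝ x (x + w) ⊆ ω + Metric.closedBall 0 δ := by
  have hδ : 0 ≤ δ := (norm_nonneg w).trans hw
  refine ((convex_closedBall x δ).segment_subset (Metric.mem_closedBall_self hδ)
    (by simpa using hw)).trans ?_
  rw [← singleton_add_closedBall_zero]
  exact Set.add_subset_add_right (Set.singleton_subset_iff.2 hx)

theorem gsubdiff_bounded_general {M N : ℕ}
    (X : Set (EuclideanSpace ℝ (Fin M))) (Ycl : Set (EuclideanSpace ℝ (Fin N))) (Zcl : Set ℝ)
    (G H : EuclideanSpace ℝ (Fin M) → EuclideanSpace ℝ (Fin N) → ℝ → ℝ)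
    (Gx : EuclideanSpace ℝ (Fin M) → EuclideanSpace ℝ (Fin N) → ℝ →
      (EuclideanSpace ℝ (Fin M) →L[ℝ] ℝ))
    -- G is C¹ in x with derivative Gx
    (hGx : ∀ y ∈ Ycl, ∀ z ∈ Zcl, ∀ x ∈ X, HasFDerivAt (fun x' => G x' y z) (Gx x y z) x)
    -- G coordinatewise nondecreasing in x
    (hmono : ∀ y ∈ Ycl, ∀ z ∈ Zcl, ∀ α β : EuclideanSpace ℝ (Fin M),
      (∀ i, β i ≤ α i) → G β y z ≤ G α y z)
    -- coercivity of the 1-norm of D_x G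
    (hcoer : ∀ s > (0:ℝ), ∃ r > (0:ℝ), ∀ x ∈ X, ∀ y ∈ Ycl, ∀ z ∈ Zcl,
      r ≤ ‖y‖ → s ≤ ∑ i, |Gx x y z (EuclideanSpace.single i 1)|)
    -- H is the inverse of G in the price variable
    (hGH : ∀ x y u, G x y (H x y u) = u)
    (hHmem : ∀ x y u, H x y u ∈ Zcl)
    (ω : Set (EuclideanSpace ℝ (Fin M)))
    (δ R : ℝ) (hδ : 0 < δ) (hR : 0 < R)
    (hsub : ω + Metric.closedBall (0 : EuclideanSpace ℝ (Fin M)) δ ⊆ X) :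
    ∃ T > (0:ℝ), ∀ u : EuclideanSpace ℝ (Fin M) → ℝ,
      GConvexOn X Ycl Zcl G u →
      (∀ x ∈ ω + Metric.closedBall (0 : EuclideanSpace ℝ (Fin M)) δ, |u x| ≤ R) →
      ∀ x ∈ ω, ∀ y ∈ GSubdiff X Ycl G H u x, ‖y‖ ≤ T := by
  set c : ℝ := δ / (Fintype.card (Fin M) + 1)
  have hc : 0 < c := by positivity
  set w := c • ∑ i : Fin M, EuclideanSpace.single i (1 : ℝ)
  obtain ⟨r, hr, hco⟩ := hcoer ((2 * R + 1) / c) (by positivity)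
  refine ⟨r, hr, fun u _ hub x hx y ⟨hyY, hy⟩ => ?_⟩
  by_contra! hyr
  set z := H x y (u x)
  have hz : z ∈ Zcl := hHmem _ _ _
  have hseg : segment ℝ x (x + w) ⊆ ω + Metric.closedBall 0 δ :=
    segment_add_subset_add_closedBall hx (norm_div_card_add_one_smul_sum_single_le hδ.le)
  have hslope : ∀ ξ ∈ segment ℝ x (x + w),
      (2 * R + 1) / c ≤ ∑ i, Gx ξ y z (EuclideanSpace.single i 1) := fun ξ hξ => by
    have hξX := hsub (hseg hξ)
    refine (hco ξ hξX y hyY z hz hyr.le).trans_eq (Finset.sum_congr rfl fun i _ => abs_of_nonneg ?_)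
    exact (hGx y hyY z hz ξ hξX).apply_single_nonneg_of_monotone (hmono y hyY z hz) i
  have hgrowth := mul_le_sub_of_hasFDerivAt_segment hc.le
    (fun ξ hξ => hGx y hyY z hz ξ (hsub (hseg hξ))) hslope
  rw [mul_div_cancel₀ _ hc.ne'] at hgrowth
  have hx_touch : G x y z = u x := hGH _ _ _
  have hxw_below : G (x + w) y z ≤ u (x + w) := hy _ (hsub (hseg (right_mem_segment ℝ _ _)))
  have hux := (abs_le.1 (hub x (hseg (left_mem_segment ℝ _ _)))).1
  have huxw := (abs_le.1 (hub _ (hseg (right_mem_segment ℝ _ _)))).2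
  linarith

/-- Local uniform bounds on a `G`-convex function `u` imply a bound, independent of `u`,
on the norms of the elements of its `G`-subdifferential over a compact subset. -/
theorem gsubdiff_bounded {M N : ℕ}
    (X : Set (EuclideanSpace ℝ (Fin M))) (Ycl : Set (EuclideanSpace ℝ (Fin N))) (Zcl : Set ℝ)
    (hXopen : IsOpen X) (hXbdd : Bornology.IsBounded X) (hXconv : Convex ℝ X)
    (G H : EuclideanSpace ℝ (Fin M) → EuclideanSpace ℝ (Fin N) → ℝ → ℝ)
    (Gx : EuclideanSpace ℝ (Fin M) → EuclideanSpace ℝ (Fin N) → ℝ →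
      (EuclideanSpace ℝ (Fin M) →L[ℝ] ℝ))
    -- G is C¹ in x with derivative Gx
    (hGx : ∀ y ∈ Ycl, ∀ z ∈ Zcl, ∀ x ∈ X, HasFDerivAt (fun x' => G x' y z) (Gx x y z) x)
    -- G strictly decreasing in z
    (hGanti : ∀ x y, StrictAnti (G x y))
    -- G coordinatewise nondecreasing in x
    (hmono : ∀ y ∈ Ycl, ∀ z ∈ Zcl, ∀ α β : EuclideanSpace ℝ (Fin M),
      (∀ i, β i ≤ α i) → G β y z ≤ G α y z)
    -- coercivity of the 1-norm of D_x G
    (hcoer : ∀ s > (0:ℝ), ∃ r > (0:ℝ), ∀ x ∈ X, ∀ y ∈ Ycl, ∀ z ∈ Zcl,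
      r ≤ ‖y‖ → s ≤ ∑ i, |Gx x y z (EuclideanSpace.single i 1)|)
    -- H is the inverse of G in the price variable
    (hHG : ∀ x y z, H x y (G x y z) = z)
    (hGH : ∀ x y u, G x y (H x y u) = u)
    (hHmem : ∀ x y u, H x y u ∈ Zcl)
    (ω : Set (EuclideanSpace ℝ (Fin M))) (hωcpt : IsCompact ω) (hωX : ω ⊆ X)
    (δ R : ℝ) (hδ : 0 < δ) (hR : 0 < R)
    (hsub : ω + Metric.closedBall (0 : EuclideanSpace ℝ (Fin M)) δ ⊆ X) :
    ∃ T > (0:ℝ), ∀ u : EuclideanSpace ℝ (Fin M) → ℝ,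
      GConvexOn X Ycl Zcl G u →
      (∀ x ∈ ω + Metric.closedBall (0 : EuclideanSpace ℝ (Fin M)) δ, |u x| ≤ R) →
      ∀ x ∈ ω, ∀ y ∈ GSubdiff X Ycl G H u x, ‖y‖ ≤ T :=
  gsubdiff_bounded_general X Ycl Zcl G H Gx hGx hmono hcoer hGH hHmem ω δ R hδ hR hsub
end

section
/- If u is G-convex and D_xG is Lipschitz in x with constant k uniformly in (y,z), then for λ ≥ k/2 the function v(x) := u(x) + λ‖x‖² is convex on X. -/
open Set AffineMap

theorem convexOn_of_forall_exists_convexOn_minorant {𝕜 E β : Type*} [Semiring 𝕜]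
    [PartialOrder 𝕜] [AddCommMonoid E] [SMul 𝕜 E] [AddCommMonoid β] [PartialOrder β]
    [IsOrderedAddMonoid β] [SMul 𝕜 β] [PosSMulMono 𝕜 β] {s : Set E} {u : E → β}
    (hs : Convex 𝕜 s) (h : ∀ x ∈ s, ∃ g : E → β, ConvexOn 𝕜 s g ∧ g x = u x ∧ ∀ y ∈ s, g y ≤ u y) :
    ConvexOn 𝕜 s u := by
  refine ⟨hs, fun x hx y hy a b ha hb hab => ?_⟩
  obtain ⟨g, hg, hgu, hle⟩ := h _ (hs hx hy ha hb hab)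
  calc u (a • x + b • y) = g (a • x + b • y) := hgu.symm
    _ ≤ a • g x + b • g y := hg.2 hx hy ha hb hab
    _ ≤ a • u x + b • u y :=
      add_le_add (smul_le_smul_of_nonneg_left (hle x hx) ha)
        (smul_le_smul_of_nonneg_left (hle y hy) hb)

theorem convexOn_of_hasFDerivAt_of_monotone {E : Type*} [NormedAddCommGroup E] [NormedSpace ℝ E]
    {s : Set E} {f : E → ℝ} {f' : E → E →L[ℝ] ℝ} (hs : Convex ℝ s)
    (hf : ∀ x ∈ s, HasFDerivAt f (f' x) x)
    (hmono : ∀ x ∈ s, ∀ y ∈ s, 0 ≤ (f' y - f' x) (y - x)) : ConvexOn ℝ s f := by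
  refine ⟨hs, fun p hp q hq a b ha hb hab => ?_⟩
  have hline : ∀ t ∈ Icc (0 : ℝ) 1, lineMap p q t ∈ s := fun t ht => hs.lineMap_mem hp hq ht
  have hg : ∀ t ∈ Icc (0 : ℝ) 1, HasDerivAt (f ∘ lineMap p q) (f' (lineMap p q t) (q - p)) t :=
    fun t ht => (hf _ (hline t ht)).comp_hasDerivAt t hasDerivAt_lineMap
  have hg_mono : MonotoneOn (deriv (f ∘ lineMap p q)) (interior (Icc (0 : ℝ) 1)) := by
    rw [interior_Icc]
    intro t₁ ht₁ t₂ ht₂ hle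
    rw [(hg t₁ (Ioo_subset_Icc_self ht₁)).deriv, (hg t₂ (Ioo_subset_Icc_self ht₂)).deriv]
    rcases hle.eq_or_lt with rfl | hlt
    · rfl
    have hsub : lineMap p q t₂ - lineMap p q t₁ = (t₂ - t₁) • (q - p) := by
      simp only [lineMap_apply_module']
      module
    have h := hmono _ (hline t₁ (Ioo_subset_Icc_self ht₁)) _ (hline t₂ (Ioo_subset_Icc_self ht₂))
    rw [hsub, map_smul, smul_eq_mul, sub_apply] at h
    exact sub_nonneg.1 (nonneg_of_mul_nonneg_right (by linarith) (sub_pos.2 hlt))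
  have hg_conv : ConvexOn ℝ (Icc (0 : ℝ) 1) (f ∘ lineMap p q) :=
    hg_mono.convexOn_of_deriv (convex_Icc 0 1)
      (fun t ht => (hg t ht).continuousAt.continuousWithinAt)
      (fun t ht => (hg t (interior_subset ht)).differentiableAt.differentiableWithinAt)
  obtain rfl : a = 1 - b := eq_sub_of_add_eq hab
  simpa [lineMap_apply_module] using
    hg_conv.2 (left_mem_Icc.2 zero_le_one) (right_mem_Icc.2 zero_le_one) ha hb hab

theorem convexOn_add_mul_norm_sq_of_lipschitz_fderiv {F : Type*} [NormedAddCommGroup F]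
    [InnerProductSpace ℝ F] {s : Set F} {f : F → ℝ} {f' : F → F →L[ℝ] ℝ} {k lam : ℝ}
    (hs : Convex ℝ s) (hf : ∀ x ∈ s, HasFDerivAt f (f' x) x)
    (hf' : ∀ x ∈ s, ∀ y ∈ s, ‖f' x - f' y‖ ≤ k * ‖x - y‖) (hlam : k / 2 ≤ lam) :
    ConvexOn ℝ s (fun x => f x + lam * ‖x‖ ^ 2) := by
  refine convexOn_of_hasFDerivAt_of_monotone hs (f' := fun x => f' x + lam • 2 • innerSL ℝ x)
    (fun x hx => (hf x hx).add ((hasStrictFDerivAt_norm_sq x).hasFDerivAt.const_mul lam)) ?_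
  intro x hx y hy
  have hf'_ge : -(k * ‖y - x‖ ^ 2) ≤ (f' y - f' x) (y - x) := by
    rw [neg_le, ← (f' y - f' x).map_neg, neg_sub]
    calc (f' y - f' x) (x - y) ≤ ‖f' y - f' x‖ * ‖x - y‖ :=
          (le_abs_self _).trans ((f' y - f' x).le_opNorm _)
      _ ≤ k * ‖y - x‖ * ‖x - y‖ := by gcongr; exact hf' y hy x hx
      _ = k * ‖y - x‖ ^ 2 := by rw [norm_sub_rev x y]; ring
  have hsq : (lam • 2 • innerSL ℝ y - lam • 2 • innerSL ℝ x) (y - x) = 2 * lam * ‖y - x‖ ^ 2 := by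
    simp only [sub_apply, smul_apply, innerSL_apply_apply, smul_eq_mul,
      nsmul_eq_mul, ← mul_sub, ← inner_sub_left, real_inner_self_eq_norm_sq]
    push_cast; ring
  have hsplit : (f' y + lam • 2 • innerSL ℝ y - (f' x + lam • 2 • innerSL ℝ x)) (y - x)
      = (f' y - f' x) (y - x) + (lam • 2 • innerSL ℝ y - lam • 2 • innerSL ℝ x) (y - x) := by
    rw [add_sub_add_comm, add_apply]
  rw [hsplit, hsq]
  linarith [mul_le_mul_of_nonneg_right hlam (sq_nonneg ‖y - x‖)]

theorem gconvex_plus_lambda_sq_convex_general {M : ℕ} {F : Type*}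
    (X : Set (EuclideanSpace ℝ (Fin M))) (Ycl : Set F) (Zcl : Set ℝ)
    (hXconv : Convex ℝ X)
    (G : EuclideanSpace ℝ (Fin M) → F → ℝ → ℝ)
    (Gx : EuclideanSpace ℝ (Fin M) → F → ℝ → (EuclideanSpace ℝ (Fin M) →L[ℝ] ℝ))
    (hGx : ∀ y ∈ Ycl, ∀ z ∈ Zcl, ∀ x ∈ X, HasFDerivAt (fun x' => G x' y z) (Gx x y z) x)
    (k : ℝ)
    (hLip : ∀ y ∈ Ycl, ∀ z ∈ Zcl, ∀ x ∈ X, ∀ x' ∈ X,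
      ‖Gx x y z - Gx x' y z‖ ≤ k * ‖x - x'‖)
    (lam : ℝ) (hlam : k / 2 ≤ lam)
    (u : EuclideanSpace ℝ (Fin M) → ℝ)
    (hu : GConvexOn X Ycl Zcl G u) :
    ConvexOn ℝ X (fun x => u x + lam * ‖x‖ ^ 2) := by
  refine convexOn_of_forall_exists_convexOn_minorant hXconv fun x₀ hx₀ => ?_
  obtain ⟨y₀, hy₀, z₀, hz₀, hu₀, hle⟩ := hu x₀ hx₀
  refine ⟨fun x => G x y₀ z₀ + lam * ‖x‖ ^ 2, ?_, by rw [hu₀],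
    fun x hx => add_le_add_left (hle x hx) _⟩
  exact convexOn_add_mul_norm_sq_of_lipschitz_fderiv hXconv (hGx y₀ hy₀ z₀ hz₀)
    (hLip y₀ hy₀ z₀ hz₀) hlam

/-- If `u` is `G`-convex and `D_x G` is `k`-Lipschitz in `x` uniformly in `(y,z)`, then
for `λ ≥ k/2` the function `v(x) := u(x) + λ‖x‖²` is convex on `X`. -/
theorem gconvex_plus_lambda_sq_convex {M : ℕ} {F : Type*}
    (X : Set (EuclideanSpace ℝ (Fin M))) (Ycl : Set F) (Zcl : Set ℝ)
    (hXopen : IsOpen X) (hXconv : Convex ℝ X)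
    (G : EuclideanSpace ℝ (Fin M) → F → ℝ → ℝ)
    (Gx : EuclideanSpace ℝ (Fin M) → F → ℝ → (EuclideanSpace ℝ (Fin M) →L[ℝ] ℝ))
    (hGx : ∀ y ∈ Ycl, ∀ z ∈ Zcl, ∀ x ∈ X, HasFDerivAt (fun x' => G x' y z) (Gx x y z) x)
    (hGanti : ∀ x y, StrictAnti (G x y))
    (k : ℝ) (hk : 0 ≤ k)
    (hLip : ∀ y ∈ Ycl, ∀ z ∈ Zcl, ∀ x ∈ X, ∀ x' ∈ X,
      ‖Gx x y z - Gx x' y z‖ ≤ k * ‖x - x'‖)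
    (lam : ℝ) (hlam : k / 2 ≤ lam)
    (u : EuclideanSpace ℝ (Fin M) → ℝ)
    (hu : GConvexOn X Ycl Zcl G u) :
    ConvexOn ℝ X (fun x => u x + lam * ‖x‖ ^ 2) :=
  gconvex_plus_lambda_sq_convex_general X Ycl Zcl hXconv G Gx hGx k hLip lam hlam u hu
end

section
/- Let {u_n} be a sequence of nondecreasing (with respect to the coordinatewise order) measurable functions on an open bounded convex set X ⊆ ℝ^M such that sup_n ‖u_n‖_{W^{1,1}(ω)} < ∞ for every open convex ω compactly contained in X. Then sup_n ‖u_n‖_{L^∞(ω̄)} < ∞ for every ω compactly contained in X. -/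
/-!
A coordinatewise nondecreasing `f` with `f y ≥ 0` satisfies `f ≥ f y` on the ball of radius `r`
centred at `y + (r, …, r)`, which lies above `y` in every coordinate; if `f y < 0`, use the ball
centred at `y - (r, …, r)` instead. Either way `|f y| * vol (ball 0 r) ≤ ∫ |f|` over any set
containing `ball y ((√M + 1) r)`. Every compact subset of `X` has a uniform such neighbourhood
inside one open convex set compactly contained in `X` (a thickening of its convex hull), so the
local `W^{1,1}` bound gives a uniform `L^∞` bound. The integrals make sense because monotone
functions are locally bounded, hence integrable on compact subsets of `X`.
-/

open MeasureTheory Metric Set Pointwise Bornology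

section Thickening

variable {E : Type*} [NormedAddCommGroup E] [NormedSpace ℝ E]

lemma thickening_convexHull (ε : ℝ) (K : Set E) :
    thickening ε (convexHull ℝ K) = convexHull ℝ (thickening ε K) := by
  rw [← add_ball_zero, ← add_ball_zero, convexHull_add, (convex_ball 0 ε).convexHull_eq]

lemma IsCompact.exists_isOpen_convex_forall_ball_subset {K X : Set E} (hK : IsCompact K)
    (hX : IsOpen X) (hXc : Convex ℝ X) (hKX : K ⊆ X) :
    ∃ U, IsOpen U ∧ Convex ℝ U ∧ closure U ⊆ X ∧ ∃ ρ > 0, ∀ y ∈ K, ball y ρ ⊆ U := by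
  obtain ⟨ε, hε, hεX⟩ := hK.exists_thickening_subset_open hX hKX
  have hhullX : thickening ε (convexHull ℝ K) ⊆ X := by
    rw [thickening_convexHull]
    exact convexHull_min hεX hXc
  refine ⟨thickening (ε / 2) (convexHull ℝ K), isOpen_thickening,
    (convex_convexHull ℝ K).thickening _, ?_, ε / 2, by positivity, fun y hy ↦
      ball_subset_thickening (subset_convexHull ℝ K hy) _⟩
  exact (closure_thickening_subset_cthickening _ _).trans
    ((cthickening_subset_thickening' hε (by linarith) _).trans hhullX)

end Thickening

lemma IsCompact.isBounded_image_of_forall_nhds {α β : Type*} [TopologicalSpace α]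
    [PseudoMetricSpace β] {f : α → β} {K : Set α} (hK : IsCompact K)
    (h : ∀ x ∈ K, ∃ t ∈ nhds x, IsBounded (f '' t)) : IsBounded (f '' K) := by
  refine hK.induction_on (by simp) (fun s t hst ht ↦ ht.subset (image_mono hst))
    (fun s t hs ht ↦ by rw [image_union]; exact hs.union ht) fun x hx ↦ ?_
  obtain ⟨t, ht, hbdd⟩ := h x hx
  exact ⟨t, mem_nhdsWithin_of_mem_nhds ht, hbdd⟩

section Euclidean

variable {ι : Type*}

noncomputable def constVec (ι : Type*) (a : ℝ) : EuclideanSpace ℝ ι := WithLp.toLp 2 fun _ ↦ a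

@[simp]
lemma constVec_apply (a : ℝ) (i : ι) : constVec ι a i = a := rfl

def CoordMonotoneOn (f : EuclideanSpace ℝ ι → ℝ) (s : Set (EuclideanSpace ℝ ι)) : Prop :=
  ∀ x ∈ s, ∀ x' ∈ s, (∀ i, x' i ≤ x i) → f x' ≤ f x

variable [Fintype ι]

lemma norm_constVec (a : ℝ) : ‖constVec ι a‖ = √(Fintype.card ι) * |a| := by
  simp [EuclideanSpace.norm_eq, Real.sqrt_mul (Nat.cast_nonneg _), Real.sqrt_sq_eq_abs]

lemma apply_mem_Ioo_of_mem_ball {c z : EuclideanSpace ℝ ι} {r : ℝ} (hz : z ∈ ball c r) (i : ι) :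
    z i ∈ Ioo (c i - r) (c i + r) := by
  have := (PiLp.dist_apply_le z c i).trans_lt hz
  rw [Real.dist_eq, abs_lt] at this
  constructor <;> linarith

lemma ball_add_constVec_subset_ball (y : EuclideanSpace ℝ ι) {a r : ℝ} (ha : |a| = r) :
    ball (y + constVec ι a) r ⊆ ball y ((√(Fintype.card ι) + 1) * r) :=
  ball_subset_ball' (by rw [dist_eq_norm, add_sub_cancel_left, norm_constVec, ha]; linarith)

namespace CoordMonotoneOn

variable {f : EuclideanSpace ℝ ι → ℝ} {X : Set (EuclideanSpace ℝ ι)}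

lemma exists_nhds_isBounded_image (hf : CoordMonotoneOn f X) (hX : IsOpen X) {x}
    (hx : x ∈ X) : ∃ t ∈ nhds x, IsBounded (f '' t) := by
  obtain ⟨r, hr, hrX⟩ := isOpen_iff.mp hX x hx
  set d := r / (√(Fintype.card ι) + 1)
  have hd : 0 < d := by positivity
  rw [show r = (√(Fintype.card ι) + 1) * d by simp only [d]; field_simp] at hrX
  have hup := hrX (ball_add_constVec_subset_ball x (abs_of_pos hd) (mem_ball_self hd))
  have hdown := hrX (ball_add_constVec_subset_ball x (a := -d) (by rw [abs_neg, abs_of_pos hd])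
    (mem_ball_self hd))
  refine ⟨ball x d, ball_mem_nhds x hd,
    (isBounded_Icc (f (x + constVec ι (-d))) (f (x + constVec ι d))).subset ?_⟩
  rintro _ ⟨z, hz, rfl⟩
  have hzX : z ∈ X := hrX (ball_subset_ball (by nlinarith [Real.sqrt_nonneg (Fintype.card ι)]) hz)
  have hbox := apply_mem_Ioo_of_mem_ball hz
  refine ⟨hf z hzX _ hdown fun i ↦ ?_, hf _ hup z hzX fun i ↦ ?_⟩ <;>
    simp only [PiLp.add_apply, constVec_apply] <;> linarith [(hbox i).1, (hbox i).2]

lemma isBounded_image (hf : CoordMonotoneOn f X) (hX : IsOpen X) {K} (hK : IsCompact K)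
    (hKX : K ⊆ X) : IsBounded (f '' K) :=
  hK.isBounded_image_of_forall_nhds fun _ hx ↦ hf.exists_nhds_isBounded_image hX (hKX hx)

lemma integrableOn (hf : CoordMonotoneOn f X) (hX : IsOpen X) (hmeas : Measurable f) {S}
    (hS : IsCompact (closure S)) (hSX : closure S ⊆ X) : IntegrableOn f S := by
  obtain ⟨b, hb⟩ := isBounded_iff_forall_norm_le.mp (hf.isBounded_image hX hS hSX)
  refine (Measure.integrableOn_of_bounded hS.measure_lt_top.ne hmeas.aestronglyMeasurable
    (M := b) ?_).mono_set subset_closure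
  exact ae_restrict_of_forall_mem isClosed_closure.measurableSet fun z hz ↦ hb _ ⟨z, hz, rfl⟩

lemma exists_ball_forall_abs_le (hf : CoordMonotoneOn f X) {y : EuclideanSpace ℝ ι} {r : ℝ}
    (hr : 0 < r) (hX : ball y ((√(Fintype.card ι) + 1) * r) ⊆ X) :
    ∃ c, ball c r ⊆ ball y ((√(Fintype.card ι) + 1) * r) ∧ ∀ z ∈ ball c r, |f y| ≤ |f z| := by
  have hyX : y ∈ X := hX (mem_ball_self (by positivity))
  rcases le_or_gt 0 (f y) with hy | hy
  · have hsub := ball_add_constVec_subset_ball y (abs_of_pos hr)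
    refine ⟨y + constVec ι r, hsub, fun z hz ↦ ?_⟩
    have hyz : f y ≤ f z := hf z (hX (hsub hz)) y hyX fun i ↦ by
      simpa using (apply_mem_Ioo_of_mem_ball hz i).1.le
    rw [abs_of_nonneg hy]
    exact hyz.trans (le_abs_self _)
  · have hsub := ball_add_constVec_subset_ball y (a := -r) (by rw [abs_neg, abs_of_pos hr])
    refine ⟨y + constVec ι (-r), hsub, fun z hz ↦ ?_⟩
    have hzy : f z ≤ f y := hf y hyX z (hX (hsub hz)) fun i ↦ by
      simpa using (apply_mem_Ioo_of_mem_ball hz i).2.le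
    rw [abs_of_neg hy, abs_of_neg (hzy.trans_lt hy)]
    linarith

lemma abs_mul_volume_ball_le_setIntegral (hf : CoordMonotoneOn f X) {S} (hSX : S ⊆ X)
    (hint : IntegrableOn (fun z ↦ |f z|) S) {y : EuclideanSpace ℝ ι} {r : ℝ} (hr : 0 < r)
    (hS : ball y ((√(Fintype.card ι) + 1) * r) ⊆ S) :
    |f y| * volume.real (ball (0 : EuclideanSpace ℝ ι) r) ≤ ∫ z in S, |f z| := by
  obtain ⟨c, hc, hle⟩ := hf.exists_ball_forall_abs_le hr (hS.trans hSX)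
  calc |f y| * volume.real (ball (0 : EuclideanSpace ℝ ι) r)
      = |f y| * volume.real (ball c r) := by rw [Measure.addHaar_real_ball_center volume c]
    _ ≤ ∫ z in ball c r, |f z| := setIntegral_ge_of_const_le_real measurableSet_ball
        measure_ball_lt_top.ne hle (hint.mono_set (hc.trans hS))
    _ ≤ ∫ z in S, |f z| := setIntegral_mono_set hint
        (.of_forall fun z ↦ abs_nonneg (f z)) (hc.trans hS).eventuallyLE

end CoordMonotoneOn

end Euclidean

/-- Coordinatewise-nondecreasing functions on an open bounded convex set whose
`W^{1,1}` norms are locally uniformly bounded are locally uniformly bounded in `L^∞`. -/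
theorem locally_bounded_of_monotone_W11 {M : ℕ}
    (X : Set (EuclideanSpace ℝ (Fin M)))
    (hXopen : IsOpen X) (hXconv : Convex ℝ X) (hXbdd : Bornology.IsBounded X)
    (u : ℕ → EuclideanSpace ℝ (Fin M) → ℝ)
    (hmeas : ∀ n, Measurable (u n))
    (hmono : ∀ n, ∀ x ∈ X, ∀ x' ∈ X, (∀ i, x' i ≤ x i) → u n x' ≤ u n x)
    (hW : ∀ ω : Set (EuclideanSpace ℝ (Fin M)), IsOpen ω → Convex ℝ ω → closure ω ⊆ X →
      ∃ C : ℝ, ∀ n,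
        (∫ x in ω, |u n x|) + (∫ x in ω, ‖fderiv ℝ (u n) x‖) ≤ C) :
    ∀ ω : Set (EuclideanSpace ℝ (Fin M)), closure ω ⊆ X →
      ∃ C : ℝ, ∀ n, ∀ x ∈ closure ω, |u n x| ≤ C := by
  intro ω hω
  have hωc : IsCompact (closure ω) :=
    isCompact_of_isClosed_isBounded isClosed_closure (hXbdd.subset hω)
  obtain ⟨U, hUo, hUc, hUX, ρ, hρ, hball⟩ :=
    hωc.exists_isOpen_convex_forall_ball_subset hXopen hXconv hω
  have hUK : IsCompact (closure U) :=
    isCompact_of_isClosed_isBounded isClosed_closure (hXbdd.subset hUX)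
  obtain ⟨C, hC⟩ := hW U hUo hUc hUX
  set r := ρ / (√(Fintype.card (Fin M)) + 1)
  have hr : 0 < r := by positivity
  have hρr : (√(Fintype.card (Fin M)) + 1) * r = ρ := by simp only [r]; field_simp
  have hvol : 0 < volume.real (ball (0 : EuclideanSpace ℝ (Fin M)) r) :=
    ENNReal.toReal_pos (measure_ball_pos _ _ hr).ne' measure_ball_lt_top.ne
  refine ⟨C / volume.real (ball (0 : EuclideanSpace ℝ (Fin M)) r), fun n y hy ↦ ?_⟩
  rw [le_div_iff₀ hvol]
  have hmono' : CoordMonotoneOn (u n) X := hmono n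
  calc |u n y| * volume.real (ball (0 : EuclideanSpace ℝ (Fin M)) r) ≤ ∫ z in U, |u n z| :=
        hmono'.abs_mul_volume_ball_le_setIntegral (subset_closure.trans hUX)
          (hmono'.integrableOn hXopen (hmeas n) hUK hUX).abs hr (hρr ▸ hball y hy)
    _ ≤ C := by
        linarith [hC n, integral_nonneg (μ := volume.restrict U)
          (f := fun z ↦ ‖fderiv ℝ (u n) z‖) fun z ↦ norm_nonneg _]
end
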